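/- Single extension step of a reduced alignment is proper (Lemma 1, no-repeatable-sequence case): let ε = pre ++ ε₁ ++ ε₂ ++ suf be a list of synchronizations such that projD ε₁ = projD ε₂ = α. Define the middle copy mid := the list of synchronizations LH l for each label l of α, taken in order (so projD mid = α and projRG mid = []). Then for every natural number m ≥ 0, the extended alignment ε_ext := pre ++ ε₁ ++ mid^m ++ ε₂ ++ suf satisfies: (1) projD ε_ext = projD pre ++ α^(m+2) ++ projD suf, and (2) projRG ε_ext = projRG ε; in particular, if projRG ε is a path then so is projRG ε_ext, with the same first and last arcs. -/
import Mathlib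


/-- A synchronization: log move `LH`, model move `RH`, or synchronous move `MT`.
Arcs are triples `(src, label, tgt) : N × S × N`. -/
inductive Sync (S N : Type*) where
  | LH : S → Sync S N
  | RH : N × S × N → Sync S N
  | MT : N × S × N → Sync S N

/-- The log (DAFSA) projection: the trace labels of the `LH` and `MT` elements, in order. -/
def projD {S N : Type*} : List (Sync S N) → List S :=
  List.filterMap fun x =>
    match x with
    | .LH l => some l
    | .RH _ => none
    | .MT a => some a.2.1

/-- The model (reachability-graph) projection: the arcs of the `RH` and `MT`
elements, in order. -/
def projRG {S N : Type*} : List (Sync S N) → List (N × S × N) :=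
  List.filterMap fun x =>
    match x with
    | .LH _ => none
    | .RH a => some a
    | .MT a => some a

lemma projD_append {S N : Type*} (a b : List (Sync S N)) :
    projD (a ++ b) = projD a ++ projD b := List.filterMap_append ..

lemma projRG_append {S N : Type*} (a b : List (Sync S N)) :
    projRG (a ++ b) = projRG a ++ projRG b := List.filterMap_append ..

lemma projD_map_LH {S N : Type*} (α : List S) :
    projD (α.map (Sync.LH (N := N))) = α := by
  induction α with
  | nil => rfl
  | cons a t ih => simp only [List.map_cons, projD, List.filterMap_cons] at *; rw [ih]

lemma projRG_map_LH {S N : Type*} (α : List S) :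
    projRG (α.map (Sync.LH (N := N))) = [] := by
  induction α with
  | nil => rfl
  | cons a t ih => simp only [List.map_cons, projRG, List.filterMap_cons] at *; rw [ih]

lemma projD_mid {S N : Type*} (α : List S) (m : ℕ) :
    projD ((List.replicate m (α.map (Sync.LH (N := N)))).flatten) = (List.replicate m α).flatten := by
  induction m with
  | zero => rfl
  | succ n ih =>
    simp only [List.replicate_succ, List.flatten_cons, projD_append, ih, projD_map_LH]

lemma projRG_mid {S N : Type*} (α : List S) (m : ℕ) :
    projRG ((List.replicate m (α.map (Sync.LH (N := N)))).flatten) = [] := by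
  induction m with
  | zero => rfl
  | succ n ih =>
    simp only [List.replicate_succ, List.flatten_cons, projRG_append, ih, projRG_map_LH,
      List.append_nil]

lemma flatten_rep_comm {S : Type*} (α : List S) (m : ℕ) :
    (List.replicate m α).flatten ++ α = α ++ (List.replicate m α).flatten := by
  induction m with
  | zero => simp
  | succ n ih => simp only [List.replicate_succ, List.flatten_cons, List.append_assoc, ih]

/-- Single extension step of a reduced alignment is proper (no-repeatable-sequence case):
inserting `m` copies of the all-`LH` middle copy `mid := α.map Sync.LH` between the two
aligned copies of a tandem repeat yields an alignment whose log projection is the trace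
with `m + 2` copies of the repeat type and whose model projection is unchanged; in
particular, if the model projection of `ε` is a path then so is that of the extended
alignment, with the same first and last arcs. -/
theorem extension_step_no_repeatable {S N : Type*}
    (pre ε₁ ε₂ suf : List (Sync S N)) (α : List S)
    (h₁ : projD ε₁ = α) (h₂ : projD ε₂ = α)
    (m : ℕ) :
    projD (pre ++ ε₁ ++ (List.replicate m (α.map Sync.LH)).flatten ++ ε₂ ++ suf)
      = projD pre ++ (List.replicate (m + 2) α).flatten ++ projD suf ∧
    projRG (pre ++ ε₁ ++ (List.replicate m (α.map Sync.LH)).flatten ++ ε₂ ++ suf)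
      = projRG (pre ++ ε₁ ++ ε₂ ++ suf) ∧
    (List.Chain' (fun x y => x.2.2 = y.1) (projRG (pre ++ ε₁ ++ ε₂ ++ suf)) →
      List.Chain' (fun x y => x.2.2 = y.1)
        (projRG (pre ++ ε₁ ++ (List.replicate m (α.map Sync.LH)).flatten ++ ε₂ ++ suf)) ∧
      (projRG (pre ++ ε₁ ++ (List.replicate m (α.map Sync.LH)).flatten ++ ε₂ ++ suf)).head?
        = (projRG (pre ++ ε₁ ++ ε₂ ++ suf)).head? ∧
      (projRG (pre ++ ε₁ ++ (List.replicate m (α.map Sync.LH)).flatten ++ ε₂ ++ suf)).getLast?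
        = (projRG (pre ++ ε₁ ++ ε₂ ++ suf)).getLast?) := by
  have hd : projD (pre ++ ε₁ ++ (List.replicate m (α.map Sync.LH)).flatten ++ ε₂ ++ suf)
      = projD pre ++ (List.replicate (m + 2) α).flatten ++ projD suf := by
    simp only [projD_append, projD_mid, h₁, h₂, List.append_assoc]
    congr 1
    rw [show m + 2 = (m+1)+1 from rfl, List.replicate_succ, List.replicate_succ,
      List.flatten_cons, List.flatten_cons]
    simp only [← List.append_assoc]
    rw [List.append_assoc α (List.replicate m α).flatten α, flatten_rep_comm]
    simp [List.append_assoc]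
  have hr : projRG (pre ++ ε₁ ++ (List.replicate m (α.map Sync.LH)).flatten ++ ε₂ ++ suf)
      = projRG (pre ++ ε₁ ++ ε₂ ++ suf) := by
    simp only [projRG_append, projRG_mid, List.append_nil]
  exact ⟨hd, hr, fun h => ⟨hr ▸ h, by rw [hr], by rw [hr]⟩⟩
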